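/- arXiv:0905.1053 — 2 statements merged into one kernel-verified Lean document; each statement's English description precedes it below -/
import Mathlib

section
/- If G_1 = (V_1, E_1) and G_2 = (V_2, E_2) are exactly k-edge-connected multigraphs on disjoint vertex sets, u_1 ∈ V_1, u_2 ∈ V_2, and G is the block gluing of G_1 and G_2 at u_1 and u_2 (the graph obtained by identifying u_1 and u_2 into a single vertex u, keeping all edges of G_1 and G_2, with edges formerly incident to u_1 or u_2 now incident to u), then G is exactly k-edge-connected. -/
/-! Basic theory of loopless undirected multigraphs. -/

/-- A loopless undirected multigraph on the vertex type `V`: a type of edges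
together with a map assigning to each edge its unordered pair of (distinct)
endpoints.  All multigraphs are assumed to have finitely many edges. -/
structure Multigraph (V : Type) where
  Edge : Type
  ends : Edge → Sym2 V
  loopless : ∀ e, ¬ (ends e).IsDiag
  edge_finite : Finite Edge

namespace Multigraph

open scoped Classical

variable {V : Type}

instance (G : Multigraph V) : Finite G.Edge := G.edge_finite

lemma exists_pair_eq {α : Type} (z : Sym2 α) : ∃ x y, z = s(x, y) := by
  induction z using Sym2.ind with
  | _ x y => exact ⟨x, y, rfl⟩

lemma map_not_isDiag {α β : Type} (f : α → β) (z : Sym2 α)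
    (hf : ∀ x ∈ z, ∀ y ∈ z, f x = f y → x = y) (hz : ¬ z.IsDiag) :
    ¬ (z.map f).IsDiag := by
  obtain ⟨x, y, rfl⟩ := exists_pair_eq z
  rw [Sym2.map_pair_eq, Sym2.mk_isDiag_iff]
  rw [Sym2.mk_isDiag_iff] at hz
  exact fun h => hz (hf x (by simp) y (by simp) h)

/-- Restrict an unordered pair, all of whose members satisfy `P`, to an
unordered pair of elements of the subtype `{x // P x}`. -/
noncomputable def sym2RestrictP {α : Type} (P : α → Prop) (z : Sym2 α) (h : ∀ x ∈ z, P x) :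
    Sym2 {x : α // P x} :=
  z.map fun x =>
    if hx : P x then ⟨x, hx⟩
    else Classical.choice (by
      obtain ⟨a, b, rfl⟩ := exists_pair_eq z
      exact ⟨⟨a, h a (by simp)⟩⟩)

lemma sym2RestrictP_not_isDiag {α : Type} (P : α → Prop) (z : Sym2 α) (h : ∀ x ∈ z, P x)
    (hz : ¬ z.IsDiag) : ¬ (sym2RestrictP P z h).IsDiag := by
  apply map_not_isDiag
  · intro a ha b hb hab
    rw [dif_pos (h a ha), dif_pos (h b hb)] at hab
    exact congrArg Subtype.val hab
  · exact hz

/-- Walks in a multigraph, recorded as alternating sequences of vertices and edges. -/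
inductive Walk (G : Multigraph V) : V → V → Type
  | nil (v : V) : Walk G v v
  | cons {u v w : V} (e : G.Edge) (he : G.ends e = s(u, v)) (p : Walk G v w) : Walk G u w

namespace Walk

variable {G : Multigraph V}

/-- The list of edges used by a walk. -/
def edges : ∀ {u v : V}, G.Walk u v → List G.Edge
  | _, _, nil _ => []
  | _, _, cons e _ p => e :: p.edges

/-- The list of vertices visited by a walk, in order. -/
def support : ∀ {u v : V}, G.Walk u v → List V
  | u, _, nil _ => [u]
  | u, _, cons _ _ p => u :: p.support

end Walk

/-- `G.HasEDP u v k` : there are (at least) `k` pairwise edge-disjoint paths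
between `u` and `v` in `G` (formalized as `k` pairwise edge-disjoint trails,
which is equivalent). -/
def HasEDP (G : Multigraph V) (u v : V) (k : ℕ) : Prop :=
  ∃ P : Fin k → G.Walk u v,
    (∀ i, (P i).edges.Nodup) ∧
    ∀ i j, i ≠ j → ∀ e, e ∈ (P i).edges → e ∉ (P j).edges

/-- `G` is `k`-edge-connected: between any two distinct vertices there are at
least `k` pairwise edge-disjoint paths. -/
def EdgeConnected (G : Multigraph V) (k : ℕ) : Prop :=
  Nontrivial V ∧ ∀ u v : V, u ≠ v → G.HasEDP u v k

/-- `G` is exactly `k`-edge-connected: between any two distinct vertices there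
are exactly `k` pairwise edge-disjoint paths (at least `k`, and not `k + 1`). -/
def ExactlyEdgeConnected (G : Multigraph V) (k : ℕ) : Prop :=
  Nontrivial V ∧ ∀ u v : V, u ≠ v → G.HasEDP u v k ∧ ¬ G.HasEDP u v (k + 1)

/-- The degree of a vertex: the number of edges incident to it. -/
noncomputable def degree (G : Multigraph V) (v : V) : ℕ :=
  {e : G.Edge | v ∈ G.ends e}.ncard

/-- Two vertices are adjacent if some edge joins them. -/
def Adj (G : Multigraph V) (u v : V) : Prop := ∃ e : G.Edge, G.ends e = s(u, v)

/-- `G` restricted to `S` is connected (witnessed by walks staying inside `S`). -/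
def ConnectedOn (G : Multigraph V) (S : Set V) : Prop :=
  ∀ u ∈ S, ∀ v ∈ S, ∃ p : G.Walk u v, ∀ x ∈ p.support, x ∈ S

/-- A multigraph is connected if it is nonempty and any two vertices are
joined by a walk. -/
def Connected (G : Multigraph V) : Prop :=
  Nonempty V ∧ ∀ u v : V, Nonempty (G.Walk u v)

/-- A multigraph is 2-vertex-connected (biconnected) if it is connected and
removing any single vertex leaves it connected. -/
def Biconnected (G : Multigraph V) : Prop :=
  G.Connected ∧ ∀ x : V, G.ConnectedOn {x}ᶜ

/-- A closed walk is a cycle if it repeats no edge, repeats no vertex except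
the base point, and has length at least 2 (a double edge is a cycle of
length 2; loops are excluded since multigraphs are loopless). -/
def IsCycle {G : Multigraph V} {v : V} (p : G.Walk v v) : Prop :=
  p.edges.Nodup ∧ p.support.tail.Nodup ∧ 2 ≤ p.edges.length

/-- A closed walk is chordless if no edge outside of it joins two of its
vertices (a parallel copy of one of its edges counts as a chord). -/
def IsChordless {G : Multigraph V} {v : V} (p : G.Walk v v) : Prop :=
  ∀ e : G.Edge, e ∉ p.edges → ∀ x y : V, G.ends e = s(x, y) →
    x ∈ p.support → y ∈ p.support → False

/-- `G.ReachAvoid S x y`: there is a walk from `x` to `y` avoiding the set `S`. -/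
def ReachAvoid (G : Multigraph V) (S : Set V) (x y : V) : Prop :=
  ∃ p : G.Walk x y, ∀ z ∈ p.support, z ∉ S

/-- The vertex sets of the connected components of `G ∖ S`.  For a cycle (or
any subgraph) `C`, the `C`-partition of the paper consists of `C` together
with these components; its size is the number of components. -/
def componentsAvoiding (G : Multigraph V) (S : Set V) : Set (Set V) :=
  {T | ∃ x, x ∉ S ∧ T = {y | G.ReachAvoid S x y}}

/-- Contract the (nonempty) vertex set `S` of `G` to a single new vertex
(`none`), deleting the edges inside `S`. -/
noncomputable def contractSet (G : Multigraph V) (S : Set V) :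
    Multigraph (Option {x : V // x ∉ S}) where
  Edge := {e : G.Edge // ¬ ∀ x ∈ G.ends e, x ∈ S}
  ends e := (G.ends e.1).map fun x => if h : x ∈ S then none else some ⟨x, h⟩
  loopless := by
    rintro ⟨e, he⟩ hd
    obtain ⟨x, y, hxy⟩ := exists_pair_eq (G.ends e)
    have hxyne : x ≠ y := by
      have h0 := G.loopless e
      rw [hxy, Sym2.mk_isDiag_iff] at h0
      exact h0
    have hor : x ∉ S ∨ y ∉ S := by
      by_contra hcon
      push_neg at hcon
      refine he fun z hz => ?_
      rw [hxy, Sym2.mem_iff] at hz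
      rcases hz with rfl | rfl
      exacts [hcon.1, hcon.2]
    simp only [hxy, Sym2.map_pair_eq, Sym2.mk_isDiag_iff] at hd
    rcases hor with hx | hy
    · rw [dif_neg hx] at hd
      by_cases hy : y ∈ S
      · rw [dif_pos hy] at hd; exact absurd hd (by simp)
      · rw [dif_neg hy] at hd
        exact hxyne (congrArg Subtype.val (Option.some_injective _ hd))
    · rw [dif_neg hy] at hd
      by_cases hx : x ∈ S
      · rw [dif_pos hx] at hd; exact absurd hd (by simp)
      · rw [dif_neg hx] at hd
        exact hxyne (congrArg Subtype.val (Option.some_injective _ hd))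
  edge_finite := by
    have := G.edge_finite
    exact inferInstance

/-- The subgraph of `G` induced by the vertex set `S`. -/
noncomputable def induce (G : Multigraph V) (S : Set V) : Multigraph ↥S where
  Edge := {e : G.Edge // ∀ x ∈ G.ends e, x ∈ S}
  ends e := sym2RestrictP (· ∈ S) (G.ends e.1) e.2
  loopless := fun e => sym2RestrictP_not_isDiag _ _ _ (G.loopless e.1)
  edge_finite := by
    have := G.edge_finite
    exact inferInstance

/-- Isomorphism of multigraphs. -/
structure Iso {V W : Type} (G : Multigraph V) (H : Multigraph W) where
  vmap : V ≃ W
  emap : G.Edge ≃ H.Edge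
  ends_vmap : ∀ e : G.Edge, H.ends (emap e) = (G.ends e).map vmap

/-- `G` is quasi `k`-regular: at most one vertex has degree different from `k`. -/
def QuasiRegular (G : Multigraph V) (k : ℕ) : Prop :=
  {v : V | G.degree v ≠ k}.Subsingleton

end Multigraph
namespace Multigraph

open scoped Classical

variable {V : Type}

/-- Block gluing: identify the vertex `u₁` of `G₁` with the vertex `u₂` of `G₂`
(the identified vertex is represented by `Sum.inl u₁`), keeping all edges. -/
noncomputable def blockGlue {V₁ V₂ : Type} (G₁ : Multigraph V₁) (G₂ : Multigraph V₂)
    (u₁ : V₁) (u₂ : V₂) : Multigraph (V₁ ⊕ {y : V₂ // y ≠ u₂}) where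
  Edge := G₁.Edge ⊕ G₂.Edge
  ends e :=
    match e with
    | .inl e => (G₁.ends e).map Sum.inl
    | .inr e => (G₂.ends e).map fun y => if h : y = u₂ then Sum.inl u₁ else Sum.inr ⟨y, h⟩
  loopless := by
    rintro (e | e) hd
    · exact map_not_isDiag _ _ (fun x _ y _ h => Sum.inl_injective h) (G₁.loopless e) hd
    · refine map_not_isDiag _ _ (fun x _ y _ h => ?_) (G₂.loopless e) hd
      by_cases hx : x = u₂ <;> by_cases hy : y = u₂
      · rw [hx, hy]
      · simp [hx, hy] at h
      · simp [hx, hy] at h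
      · simp [hx, hy] at h
        exact h
  edge_finite := by
    have := G₁.edge_finite; have := G₂.edge_finite
    exact inferInstance

/-- `k`-bridge addition: add a new vertex (`none`) joined to the existing
vertex `v` by `k` parallel edges. -/
def bridgeAdd (G : Multigraph V) (v : V) (k : ℕ) : Multigraph (Option V) where
  Edge := G.Edge ⊕ Fin k
  ends e :=
    match e with
    | .inl e => (G.ends e).map some
    | .inr _ => s(none, some v)
  loopless := by
    rintro (e | i) hd
    · exact map_not_isDiag _ _ (fun x _ y _ h => Option.some_injective _ h) (G.loopless e) hd
    · rw [Sym2.mk_isDiag_iff] at hd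
      exact absurd hd (by simp)
  edge_finite := by
    have := G.edge_finite
    exact inferInstance

end Multigraph
namespace Multigraph

open scoped Classical

variable {V : Type}

lemma other_ne {G : Multigraph V} {u : V} {e : G.Edge} (h : u ∈ G.ends e) :
    Sym2.Mem.other h ≠ u := by
  intro heq
  have hs := Sym2.other_spec h
  rw [heq] at hs
  have hl := G.loopless e
  rw [← hs, Sym2.mk_isDiag_iff] at hl
  exact hl rfl

/-- Vertex gluing: given vertices `u₁` of `G₁` and `u₂` of `G₂`, both of degree
`k` (witnessed by enumerations `ι₁`, `ι₂` of their incident edges), delete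
`u₁` and `u₂` and join, for each `i`, the other endpoint of the `i`-th edge at
`u₁` to the other endpoint of the `i`-th edge at `u₂`. -/
noncomputable def vertexGlue {V₁ V₂ : Type} (G₁ : Multigraph V₁) (G₂ : Multigraph V₂)
    (u₁ : V₁) (u₂ : V₂) {k : ℕ}
    (ι₁ : Fin k ≃ {e : G₁.Edge // u₁ ∈ G₁.ends e})
    (ι₂ : Fin k ≃ {e : G₂.Edge // u₂ ∈ G₂.ends e}) :
    Multigraph ({x : V₁ // x ≠ u₁} ⊕ {y : V₂ // y ≠ u₂}) where
  Edge := {e : G₁.Edge // u₁ ∉ G₁.ends e} ⊕ {e : G₂.Edge // u₂ ∉ G₂.ends e} ⊕ Fin k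
  ends e :=
    match e with
    | .inl e =>
        (sym2RestrictP (· ≠ u₁) (G₁.ends e.1) fun x hx hxe => e.2 (hxe ▸ hx)).map Sum.inl
    | .inr (.inl e) =>
        (sym2RestrictP (· ≠ u₂) (G₂.ends e.1) fun y hy hye => e.2 (hye ▸ hy)).map Sum.inr
    | .inr (.inr i) =>
        s(Sum.inl ⟨Sym2.Mem.other (ι₁ i).2, other_ne (ι₁ i).2⟩,
          Sum.inr ⟨Sym2.Mem.other (ι₂ i).2, other_ne (ι₂ i).2⟩)
  loopless := by
    rintro (e | e | i) hd
    · exact map_not_isDiag _ _ (fun x _ y _ h => Sum.inl_injective h)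
        (sym2RestrictP_not_isDiag _ _ _ (G₁.loopless e.1)) hd
    · exact map_not_isDiag _ _ (fun x _ y _ h => Sum.inr_injective h)
        (sym2RestrictP_not_isDiag _ _ _ (G₂.loopless e.1)) hd
    · rw [Sym2.mk_isDiag_iff] at hd
      exact absurd hd (by simp)
  edge_finite := by
    have := G₁.edge_finite; have := G₂.edge_finite
    exact inferInstance

/-- Cycle expansion: replace the vertex `u`, of degree `d` with incident edges
enumerated by `ι`, by a cycle on `d'` new vertices `u_0, …, u_{d'-1}`
(`2 ≤ d' ≤ d`); the `i`-th former edge at `u` is attached to `u_i` for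
`i < d' - 1` and to `u_{d'-1}` for `i ≥ d' - 1`, so each of `u_0, …, u_{d'-2}`
receives exactly one of them and `u_{d'-1}` receives the rest. -/
noncomputable def cycleExpand (G : Multigraph V) (u : V) {d d' : ℕ}
    (h2 : 2 ≤ d') (hdd : d' ≤ d)
    (ι : Fin d ≃ {e : G.Edge // u ∈ G.ends e}) :
    Multigraph ({x : V // x ≠ u} ⊕ Fin d') where
  Edge := {e : G.Edge // u ∉ G.ends e} ⊕ (Fin d ⊕ Fin d')
  ends e :=
    match e with
    | .inl e =>
        (sym2RestrictP (· ≠ u) (G.ends e.1) fun x hx hxe => e.2 (hxe ▸ hx)).map Sum.inl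
    | .inr (.inl i) =>
        s(Sum.inr ⟨min i.1 (d' - 1), by omega⟩,
          Sum.inl ⟨Sym2.Mem.other (ι i).2, other_ne (ι i).2⟩)
    | .inr (.inr j) =>
        s(Sum.inr j, Sum.inr ⟨(j.1 + 1) % d', Nat.mod_lt _ (by omega)⟩)
  loopless := by
    rintro (e | i | j) hd
    · exact map_not_isDiag _ _ (fun x _ y _ h => Sum.inl_injective h)
        (sym2RestrictP_not_isDiag _ _ _ (G.loopless e.1)) hd
    · rw [Sym2.mk_isDiag_iff] at hd
      exact absurd hd (by simp)
    · rw [Sym2.mk_isDiag_iff] at hd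
      have hj : j.1 < d' := j.2
      have := congrArg Fin.val (Sum.inr_injective hd)
      simp only at this
      rcases Nat.lt_or_ge (j.1 + 1) d' with h | h
      · rw [Nat.mod_eq_of_lt h] at this; omega
      · have hj1 : j.1 + 1 = d' := by omega
        rw [hj1, Nat.mod_self] at this; omega
  edge_finite := by
    have := G.edge_finite
    exact inferInstance

end Multigraph
namespace Multigraph

open scoped Classical

variable {V : Type}

/-- The edges of `G` crossing the vertex bipartition `⟨A, Aᶜ⟩`. -/
def cutEdges (G : Multigraph V) (A : Set V) : Set G.Edge :=
  {e | (∃ x ∈ G.ends e, x ∈ A) ∧ ∃ y ∈ G.ends e, y ∉ A}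

/-- The bipartition `⟨A, Aᶜ⟩` is a minimum edge cut of `G`: both sides are
nonempty and no other bipartition has fewer crossing edges. -/
def IsMinCut (G : Multigraph V) (A : Set V) : Prop :=
  A.Nonempty ∧ Aᶜ.Nonempty ∧
    ∀ B : Set V, B.Nonempty → Bᶜ.Nonempty →
      (G.cutEdges A).ncard ≤ (G.cutEdges B).ncard

/-- One side of a vertex splitting: keep the side `A` of the cut `⟨A, Aᶜ⟩`,
delete the other side, and reattach each cut edge to a single new vertex
(`none`). -/
noncomputable def splitSide (G : Multigraph V) (A : Set V) :
    Multigraph (Option {x : V // x ∈ A}) where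
  Edge := {e : G.Edge // ∀ x ∈ G.ends e, x ∈ A} ⊕ {e : G.Edge // e ∈ G.cutEdges A}
  ends e :=
    match e with
    | .inl e => (sym2RestrictP (· ∈ A) (G.ends e.1) e.2).map some
    | .inr e =>
        s(none, some ⟨Classical.choose e.2.1, (Classical.choose_spec e.2.1).2⟩)
  loopless := by
    rintro (e | e) hd
    · exact map_not_isDiag _ _ (fun x _ y _ h => Option.some_injective _ h)
        (sym2RestrictP_not_isDiag _ _ _ (G.loopless e.1)) hd
    · rw [Sym2.mk_isDiag_iff] at hd
      exact absurd hd (by simp)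
  edge_finite := by
    have := G.edge_finite
    exact inferInstance

/-- The dumbbell graph: two vertices joined by three parallel edges. -/
def dumbbell : Multigraph (Fin 2) where
  Edge := Fin 3
  ends _ := s(0, 1)
  loopless := fun _ h => absurd (Sym2.mk_isDiag_iff.mp h) (by decide)
  edge_finite := inferInstance

/-- `B` is (the vertex set of) a block of `G`: a maximal set of vertices
inducing a connected, 2-vertex-connected subgraph. -/
def IsBlock (G : Multigraph V) (B : Set V) : Prop :=
  (G.induce B).Biconnected ∧
    ∀ B' : Set V, B ⊆ B' → (G.induce B').Biconnected → B' = B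

/-- The set of double edges of `G`, as unordered pairs of distinct parallel
edges. -/
def doubleEdges (G : Multigraph V) : Set (Sym2 G.Edge) :=
  {z | ∃ e f : G.Edge, z = s(e, f) ∧ e ≠ f ∧ G.ends e = G.ends f}

/-- A collapsible cycle: a chordless, non-articulation cycle, all but at most
one of whose vertices have degree 3, whose contraction to a single vertex
yields an exactly 3-edge-connected multigraph. -/
def IsCollapsible {G : Multigraph V} {v : V} (p : G.Walk v v) : Prop :=
  IsCycle p ∧ IsChordless p ∧
    (G.componentsAvoiding {x | x ∈ p.support}).Subsingleton ∧
    {x : V | x ∈ p.support ∧ G.degree x ≠ 3}.Subsingleton ∧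
    (G.contractSet {x | x ∈ p.support}).ExactlyEdgeConnected 3

end Multigraph
namespace Multigraph

open scoped Classical

variable {V : Type}

/-- Smooth out the degree-two vertex `x` (whose two incident edges are
`e₁ = (x, a)` and `e₂ = (x, b)`): delete `x`, `e₁` and `e₂` and add a single
new edge joining `a` and `b`. -/
noncomputable def smoothAt {S : Set V} (H : Multigraph ↥S) (x a b : ↥S)
    (e₁ e₂ : H.Edge) (hne : e₁ ≠ e₂)
    (h₁ : H.ends e₁ = s(x, a)) (h₂ : H.ends e₂ = s(x, b))
    (hax : a ≠ x) (hbx : b ≠ x) (hab : a ≠ b)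
    (hdeg : ∀ e : H.Edge, x ∈ H.ends e → e = e₁ ∨ e = e₂) :
    Multigraph ↥(S \ {(x : V)}) where
  Edge := {e : H.Edge // e ≠ e₁ ∧ e ≠ e₂} ⊕ Unit
  ends e :=
    match e with
    | .inl e =>
        (sym2RestrictP (fun y : ↥S => y ≠ x) (H.ends e.1)
            (fun y hy hyx => by
              subst hyx
              rcases hdeg e.1 hy with h | h
              exacts [e.2.1 h, e.2.2 h])).map
          fun y => ⟨y.1.1, y.1.2, fun hh => y.2 (Subtype.ext hh)⟩
    | .inr _ =>
        s(⟨a.1, a.2, fun hh => hax (Subtype.ext hh)⟩,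
          ⟨b.1, b.2, fun hh => hbx (Subtype.ext hh)⟩)
  loopless := by
    rintro (e | e) hd
    · refine map_not_isDiag _ _ (fun y _ z _ h => ?_)
        (sym2RestrictP_not_isDiag _ _ _ (H.loopless e.1)) hd
      have hv := Subtype.ext_iff.mp h
      exact Subtype.ext (Subtype.ext hv)
    · rw [Sym2.mk_isDiag_iff] at hd
      have hv := Subtype.ext_iff.mp hd
      exact hab (Subtype.ext hv)
  edge_finite := by
    have := H.edge_finite
    exact inferInstance

/-- `SmoothSeq H K` : the multigraph `K` is obtained from `H` by a finite
sequence of smoothings of degree-two vertices. -/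
inductive SmoothSeq {V : Type} : ∀ {S T : Set V}, Multigraph ↥S → Multigraph ↥T → Prop
  | refl {S : Set V} (H : Multigraph ↥S) : SmoothSeq H H
  | step {S T : Set V} {H : Multigraph ↥S} {K : Multigraph ↥T}
      (x a b : ↥S) (e₁ e₂ : H.Edge) (hne : e₁ ≠ e₂)
      (h₁ : H.ends e₁ = s(x, a)) (h₂ : H.ends e₂ = s(x, b))
      (hax : a ≠ x) (hbx : b ≠ x) (hab : a ≠ b)
      (hdeg : ∀ e : H.Edge, x ∈ H.ends e → e = e₁ ∨ e = e₂) :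
      SmoothSeq (smoothAt H x a b e₁ e₂ hne h₁ h₂ hax hbx hab hdeg) K → SmoothSeq H K

/-- `G` is a 3-thick tree: it is obtained from a tree by replacing every tree
edge by three parallel edges. -/
def IsThreeThickTree (G : Multigraph V) : Prop :=
  ∃ T : SimpleGraph V, T.IsTree ∧
    ∃ f : G.Edge ≃ T.edgeSet × Fin 3, ∀ e : G.Edge, G.ends e = ((f e).1 : Sym2 V)

/-- The graphs obtainable from dumbbell graphs by cycle expansions and block
gluings (up to isomorphism). -/
inductive Synth3 : ∀ {V : Type}, Multigraph V → Prop
  | dumbbell : Synth3 dumbbell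
  | glue {V₁ V₂ : Type} {G₁ : Multigraph V₁} {G₂ : Multigraph V₂} (u₁ : V₁) (u₂ : V₂) :
      Synth3 G₁ → Synth3 G₂ → Synth3 (blockGlue G₁ G₂ u₁ u₂)
  | expand {V : Type} {G : Multigraph V} (u : V) {d d' : ℕ} (h2 : 2 ≤ d') (hdd : d' ≤ d)
      (ι : Fin d ≃ {e : G.Edge // u ∈ G.ends e}) :
      Synth3 G → Synth3 (G.cycleExpand u h2 hdd ι)
  | iso {V W : Type} {G : Multigraph V} {H : Multigraph W} :
      Synth3 G → Iso G H → Synth3 H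

/-- The graphs obtainable from 3-thick trees by block-respecting cycle
expansions (cycle expansions whose new cycle lies inside a single block of the
resulting graph), up to isomorphism. -/
inductive BRSynth : ∀ {V : Type}, Multigraph V → Prop
  | base {V : Type} {G : Multigraph V} : IsThreeThickTree G → BRSynth G
  | expand {V : Type} {G : Multigraph V} (u : V) {d d' : ℕ} (h2 : 2 ≤ d') (hdd : d' ≤ d)
      (ι : Fin d ≃ {e : G.Edge // u ∈ G.ends e})
      (hblock : ∃ B : Set ({x : V // x ≠ u} ⊕ Fin d'),
        (G.cycleExpand u h2 hdd ι).IsBlock B ∧ ∀ j : Fin d', Sum.inr j ∈ B) :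
      BRSynth G → BRSynth (G.cycleExpand u h2 hdd ι)
  | iso {V W : Type} {G : Multigraph V} {H : Multigraph W} :
      BRSynth G → Iso G H → BRSynth H

end Multigraph
namespace Multigraph

/-!
Edge-disjoint trails of `G₁` and of `G₂` embed into the glued graph with disjoint edge sets, so
trails `x ⤳ u` in `G₁` and `u ⤳ y` in `G₂` can be concatenated pairwise: any two vertices are
joined by `k` edge-disjoint trails. Conversely, contracting all of `G₂` (resp. `G₁`) onto the
glue vertex `u` sends edge-disjoint trails of the glued graph to edge-disjoint trails of `G₁`
(resp. `G₂`), and two distinct vertices stay distinct under one of the two contractions, so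
`k + 1` trails in the glued graph would give `k + 1` trails in `G₁` or `G₂`.
-/

lemma _root_.Sym2.isDiag_map_const {α β : Type} (b : β) (z : Sym2 α) :
    (z.map fun _ => b).IsDiag := by
  induction z using Sym2.ind with
  | _ x y => simp

open scoped Classical

variable {V W : Type}

namespace Walk

variable {G : Multigraph V}

def append : ∀ {u v w : V}, G.Walk u v → G.Walk v w → G.Walk u w
  | _, _, _, .nil _, q => q
  | _, _, _, .cons e he p, q => .cons e he (p.append q)

@[simp] lemma edges_append : ∀ {u v w : V} (p : G.Walk u v) (q : G.Walk v w),
    (p.append q).edges = p.edges ++ q.edges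
  | _, _, _, .nil _, _ => rfl
  | _, _, _, .cons e _ p, q => congrArg (e :: ·) (edges_append p q)

end Walk

def HasEDPIn (G : Multigraph V) (S : Set G.Edge) (u v : V) (k : ℕ) : Prop :=
  ∃ P : Fin k → G.Walk u v,
    (∀ i, (P i).edges.Nodup) ∧
    (∀ i j, i ≠ j → ∀ e, e ∈ (P i).edges → e ∉ (P j).edges) ∧
    ∀ i, ∀ e ∈ (P i).edges, e ∈ S

lemma HasEDPIn.hasEDP {G : Multigraph V} {S : Set G.Edge} {u v : V} {k : ℕ}
    (h : G.HasEDPIn S u v k) : G.HasEDP u v k :=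
  let ⟨P, hnd, hdisj, _⟩ := h
  ⟨P, hnd, hdisj⟩

lemma hasEDP_self (G : Multigraph V) (v : V) (k : ℕ) : G.HasEDP v v k :=
  ⟨fun _ => .nil v, fun _ => List.nodup_nil, fun _ _ _ _ he => absurd he List.not_mem_nil⟩

lemma ExactlyEdgeConnected.hasEDP {G : Multigraph V} {k : ℕ} (h : G.ExactlyEdgeConnected k)
    (u v : V) : G.HasEDP u v k := by
  obtain rfl | huv := eq_or_ne u v
  · exact G.hasEDP_self u k
  · exact (h.2 u v huv).1

lemma HasEDPIn.append {G : Multigraph V} {S T : Set G.Edge} {u v w : V} {k : ℕ}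
    (hST : Disjoint S T) (h₁ : G.HasEDPIn S u v k) (h₂ : G.HasEDPIn T v w k) :
    G.HasEDPIn (S ∪ T) u w k := by
  obtain ⟨P, hPnd, hPdisj, hPS⟩ := h₁
  obtain ⟨Q, hQnd, hQdisj, hQT⟩ := h₂
  have hPQ : ∀ i j, ∀ e ∈ (P i).edges, e ∉ (Q j).edges := fun i j e hP hQ =>
    hST.notMem_of_mem_left (hPS i e hP) (hQT j e hQ)
  refine ⟨fun i => (P i).append (Q i), fun i => ?_, fun i j hij e hi hj => ?_, fun i e he => ?_⟩
  · rw [Walk.edges_append, List.nodup_append]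
    exact ⟨hPnd i, hQnd i, fun e hP _ hQ => (hPQ i i e hP <| · ▸ hQ)⟩
  · rw [Walk.edges_append, List.mem_append] at hi hj
    rcases hi with hi | hi <;> rcases hj with hj | hj
    exacts [hPdisj i j hij e hi hj, hPQ i j e hi hj, hPQ j i e hj hi, hQdisj i j hij e hi hj]
  · rw [Walk.edges_append, List.mem_append] at he
    exact he.imp (hPS i e) (hQT i e)

structure Hom (G : Multigraph V) (H : Multigraph W) where
  vmap : V → W
  emap : G.Edge → H.Edge
  ends_vmap : ∀ e : G.Edge, H.ends (emap e) = (G.ends e).map vmap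

namespace Hom

variable {G : Multigraph V} {H : Multigraph W}

def mapWalk (φ : Hom G H) : ∀ {u v : V}, G.Walk u v → H.Walk (φ.vmap u) (φ.vmap v)
  | _, _, .nil _ => .nil _
  | _, _, .cons e he p => .cons (φ.emap e) (by rw [φ.ends_vmap, he, Sym2.map_mk]) (φ.mapWalk p)

lemma edges_mapWalk (φ : Hom G H) : ∀ {u v : V} (p : G.Walk u v),
    (φ.mapWalk p).edges = p.edges.map φ.emap
  | _, _, .nil _ => rfl
  | _, _, .cons e _ p => congrArg (φ.emap e :: ·) (φ.edges_mapWalk p)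

lemma hasEDPIn_range (φ : Hom G H) (hφ : Function.Injective φ.emap) {u v : V} {k : ℕ}
    (h : G.HasEDP u v k) : H.HasEDPIn (Set.range φ.emap) (φ.vmap u) (φ.vmap v) k := by
  obtain ⟨P, hnd, hdisj⟩ := h
  refine ⟨fun i => φ.mapWalk (P i), fun i => ?_, fun i j hij e hi hj => ?_, fun i e he => ?_⟩
  · rw [edges_mapWalk]
    exact (hnd i).map hφ
  · rw [edges_mapWalk, List.mem_map] at hi hj
    obtain ⟨a, ha, rfl⟩ := hi
    obtain ⟨b, hb, hba⟩ := hj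
    exact hdisj i j hij a ha (hφ hba ▸ hb)
  · rw [edges_mapWalk, List.mem_map] at he
    obtain ⟨a, -, rfl⟩ := he
    exact Set.mem_range_self a

end Hom

/-- A homomorphism from `H` to `G` after contracting the edges that `emap` sends to `none`. -/
structure ContractHom (H : Multigraph W) (G : Multigraph V) where
  vmap : W → V
  emap : H.Edge → Option G.Edge
  ends_of_emap_eq_some : ∀ e e', emap e = some e' → G.ends e' = (H.ends e).map vmap
  isDiag_of_emap_eq_none : ∀ e, emap e = none → ((H.ends e).map vmap).IsDiag
  emap_inj : ∀ e₁ e₂ e', emap e₁ = some e' → emap e₂ = some e' → e₁ = e₂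

namespace ContractHom

variable {H : Multigraph W} {G : Multigraph V}

lemma exists_walk (φ : ContractHom H G) : ∀ {u v : W} (p : H.Walk u v),
    ∃ q : G.Walk (φ.vmap u) (φ.vmap v), q.edges = p.edges.filterMap φ.emap
  | _, _, .nil _ => ⟨.nil _, rfl⟩
  | u, _, .cons (v := v) e he p => by
    obtain ⟨q, hq⟩ := φ.exists_walk p
    cases hge : φ.emap e with
    | none =>
      have huv : φ.vmap u = φ.vmap v := by
        simpa [he] using φ.isDiag_of_emap_eq_none e hge
      rw [huv]
      exact ⟨q, by simp [Walk.edges, hq, hge]⟩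
    | some e' =>
      have hends : G.ends e' = s(φ.vmap u, φ.vmap v) := by
        rw [φ.ends_of_emap_eq_some e e' hge, he, Sym2.map_mk]
      exact ⟨.cons e' hends q, by simp [Walk.edges, hq, hge]⟩

lemma hasEDP (φ : ContractHom H G) {u v : W} {k : ℕ} (h : H.HasEDP u v k) :
    G.HasEDP (φ.vmap u) (φ.vmap v) k := by
  obtain ⟨P, hnd, hdisj⟩ := h
  choose Q hQ using fun i => φ.exists_walk (P i)
  refine ⟨Q, fun i => ?_, fun i j hij e hi hj => ?_⟩
  · rw [hQ]
    exact (hnd i).filterMap fun a a' b ha ha' => φ.emap_inj a a' b ha ha'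
  · rw [hQ, List.mem_filterMap] at hi hj
    obtain ⟨a, ha, hae⟩ := hi
    obtain ⟨b, hb, hbe⟩ := hj
    exact hdisj i j hij a ha (φ.emap_inj b a e hbe hae ▸ hb)

end ContractHom

section blockGlue

variable {V₁ V₂ : Type} (G₁ : Multigraph V₁) (G₂ : Multigraph V₂) (u₁ : V₁) (u₂ : V₂)

noncomputable def glueMap (y : V₂) : V₁ ⊕ {y : V₂ // y ≠ u₂} :=
  if h : y = u₂ then Sum.inl u₁ else Sum.inr ⟨y, h⟩

lemma glueMap_self : glueMap u₁ u₂ u₂ = Sum.inl u₁ := dif_pos rfl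

lemma glueMap_val (y : {y : V₂ // y ≠ u₂}) : glueMap u₁ u₂ y = Sum.inr y := dif_neg y.2

def blockGlueInl : Hom G₁ (blockGlue G₁ G₂ u₁ u₂) := ⟨Sum.inl, Sum.inl, fun _ => rfl⟩

noncomputable def blockGlueInr : Hom G₂ (blockGlue G₁ G₂ u₁ u₂) :=
  ⟨glueMap u₁ u₂, Sum.inr, fun _ => rfl⟩

lemma blockGlue_ends_inl (e : G₁.Edge) :
    (blockGlue G₁ G₂ u₁ u₂).ends (Sum.inl e) = (G₁.ends e).map Sum.inl := rfl

lemma blockGlue_ends_inr (e : G₂.Edge) :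
    (blockGlue G₁ G₂ u₁ u₂).ends (Sum.inr e) = (G₂.ends e).map (glueMap u₁ u₂) := rfl

noncomputable def blockGlueProjLeft : ContractHom (blockGlue G₁ G₂ u₁ u₂) G₁ where
  vmap := Sum.elim id fun _ => u₁
  emap := Sum.elim some fun _ => none
  ends_of_emap_eq_some := by
    rintro (e | e) e' h
    · cases h
      simp [blockGlue_ends_inl, Sym2.map_map]
    · cases h
  isDiag_of_emap_eq_none := by
    rintro (e | e) h
    · cases h
    · have : Sum.elim id (fun _ => u₁) ∘ glueMap u₁ u₂ = fun _ => u₁ := by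
        funext y
        by_cases hy : y = u₂ <;> simp [glueMap, hy]
      rw [blockGlue_ends_inr, Sym2.map_map, this]
      exact Sym2.isDiag_map_const u₁ _
  emap_inj := by
    rintro (e | e) (f | f) e' h₁ h₂ <;> cases h₁ <;> cases h₂
    rfl

noncomputable def blockGlueProjRight : ContractHom (blockGlue G₁ G₂ u₁ u₂) G₂ where
  vmap := Sum.elim (fun _ => u₂) Subtype.val
  emap := Sum.elim (fun _ => none) some
  ends_of_emap_eq_some := by
    rintro (e | e) e' h
    · cases h
    · cases h
      have : Sum.elim (fun _ => u₂) Subtype.val ∘ glueMap u₁ u₂ = id := by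
        funext y
        by_cases hy : y = u₂ <;> simp [glueMap, hy]
      rw [blockGlue_ends_inr, Sym2.map_map, this, Sym2.map_id, id]
  isDiag_of_emap_eq_none := by
    rintro (e | e) h
    · rw [blockGlue_ends_inl, Sym2.map_map]
      exact Sym2.isDiag_map_const u₂ _
    · cases h
  emap_inj := by
    rintro (e | e) (f | f) e' h₁ h₂ <;> cases h₁ <;> cases h₂
    rfl

variable {G₁ G₂ u₁ u₂}

lemma blockGlue_eq_of_proj_eq {a b : V₁ ⊕ {y : V₂ // y ≠ u₂}}
    (h₁ : (blockGlueProjLeft G₁ G₂ u₁ u₂).vmap a = (blockGlueProjLeft G₁ G₂ u₁ u₂).vmap b)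
    (h₂ : (blockGlueProjRight G₁ G₂ u₁ u₂).vmap a = (blockGlueProjRight G₁ G₂ u₁ u₂).vmap b) :
    a = b := by
  rcases a with x | ⟨y, hy⟩ <;> rcases b with x' | ⟨y', hy'⟩ <;>
    simp only [blockGlueProjLeft, blockGlueProjRight, Sum.elim_inl, Sum.elim_inr, id] at h₁ h₂
  · rw [h₁]
  · exact absurd h₂.symm hy'
  · exact absurd h₂ hy
  · subst h₂; rfl

lemma blockGlue_hasEDP {k : ℕ} (h₁ : ∀ x y, G₁.HasEDP x y k) (h₂ : ∀ x y, G₂.HasEDP x y k)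
    (a b : V₁ ⊕ {y : V₂ // y ≠ u₂}) : (blockGlue G₁ G₂ u₁ u₂).HasEDP a b k := by
  have hL : ∀ x y, (blockGlue G₁ G₂ u₁ u₂).HasEDPIn (Set.range Sum.inl) (.inl x) (.inl y) k :=
    fun x y => (blockGlueInl G₁ G₂ u₁ u₂).hasEDPIn_range Sum.inl_injective (h₁ x y)
  have hR : ∀ x y, (blockGlue G₁ G₂ u₁ u₂).HasEDPIn (Set.range Sum.inr)
      (glueMap u₁ u₂ x) (glueMap u₁ u₂ y) k :=
    fun x y => (blockGlueInr G₁ G₂ u₁ u₂).hasEDPIn_range Sum.inr_injective (h₂ x y)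
  have hdisj := (Set.isCompl_range_inl_range_inr (α := G₁.Edge) (β := G₂.Edge)).disjoint
  rcases a with x | y <;> rcases b with x' | y'
  · exact (hL x x').hasEDP
  · have hR' := hR u₂ y'
    rw [glueMap_self, glueMap_val] at hR'
    exact ((hL x u₁).append hdisj hR').hasEDP
  · have hR' := hR y u₂
    rw [glueMap_self, glueMap_val] at hR'
    exact (hR'.append hdisj.symm (hL u₁ x')).hasEDP
  · simpa only [glueMap_val] using (hR y y').hasEDP

end blockGlue

/-- **Block gluing preserves exact `k`-edge-connectivity.**  If `G₁` and `G₂`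
are exactly `k`-edge-connected multigraphs (on disjoint vertex types) and `G`
is obtained by identifying the vertex `u₁` of `G₁` with the vertex `u₂` of
`G₂`, then `G` is exactly `k`-edge-connected. -/
theorem blockGlue_exactlyEdgeConnected {V₁ V₂ : Type} (G₁ : Multigraph V₁)
    (G₂ : Multigraph V₂) (u₁ : V₁) (u₂ : V₂) (k : ℕ)
    (h₁ : G₁.ExactlyEdgeConnected k) (h₂ : G₂.ExactlyEdgeConnected k) :
    (blockGlue G₁ G₂ u₁ u₂).ExactlyEdgeConnected k := by
  refine ⟨?_, fun a b hab => ⟨blockGlue_hasEDP h₁.hasEDP h₂.hasEDP a b, fun h => ?_⟩⟩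
  · have := h₁.1
    exact Sum.inl_injective.nontrivial
  · by_cases hL :
        (blockGlueProjLeft G₁ G₂ u₁ u₂).vmap a = (blockGlueProjLeft G₁ G₂ u₁ u₂).vmap b
    · have hR := mt (blockGlue_eq_of_proj_eq hL) hab
      exact (h₂.2 _ _ hR).2 ((blockGlueProjRight G₁ G₂ u₁ u₂).hasEDP h)
    · exact (h₁.2 _ _ hL).2 ((blockGlueProjLeft G₁ G₂ u₁ u₂).hasEDP h)

end Multigraph
end

section
/- Let G be an exactly k-edge-connected multigraph in which every minimum edge cut is trivial. Then G is quasi k-regular, i.e., at most one vertex of G has degree different from k. -/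
/-!
Max-flow min-cut gives Menger's theorem for edge cuts: if `u ≠ v` are not joined by `k + 1`
edge-disjoint trails, some set `A ∋ u` with `v ∉ A` has at most `k` edges leaving it. Every
cut has at least `k` edges, so `A` is a minimum cut, hence `A = {u}` or `Aᶜ = {v}`, and `u`
or `v` has degree `k` (degrees are cut sizes, so they are at least `k`).

Flows are partial orientations of the edges. Augmenting along residual trails reaches value `n`
as long as every `u`-`v` cut has at least `n` edges, and a flow of value `n` splits into `n`
edge-disjoint trails.
-/

namespace Multigraph

open scoped Classical

section

variable {V : Type} {G : Multigraph V}

lemma ne_of_ends_eq {e : G.Edge} {a b : V} (h : G.ends e = s(a, b)) : a ≠ b := by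
  simpa [h] using G.loopless e

lemma mem_cutEdges_iff_of_ends {A : Set V} {e : G.Edge} {a b : V} (h : G.ends e = s(a, b)) :
    e ∈ G.cutEdges A ↔ (a ∈ A ↔ b ∉ A) := by
  simp only [cutEdges, h, Set.mem_ofPred_eq, Sym2.mem_iff, exists_eq_or_imp, exists_eq_left]
  tauto

lemma cutEdges_compl (A : Set V) : G.cutEdges Aᶜ = G.cutEdges A := by
  ext e
  obtain ⟨a, b, h⟩ := exists_pair_eq (G.ends e)
  rw [mem_cutEdges_iff_of_ends h, mem_cutEdges_iff_of_ends h, Set.mem_compl_iff,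
    Set.mem_compl_iff]
  tauto

lemma degree_eq_ncard_cutEdges_singleton (x : V) : G.degree x = (G.cutEdges {x}).ncard := by
  unfold degree
  congr 1
  ext e
  obtain ⟨a, b, h⟩ := exists_pair_eq (G.ends e)
  have hab := ne_of_ends_eq h
  rw [mem_cutEdges_iff_of_ends h, Set.mem_ofPred_eq, h, Sym2.mem_iff, Set.mem_singleton_iff,
    Set.mem_singleton_iff]
  grind

lemma Walk.exists_mem_edges_mem_cutEdges {A : Set V} :
    ∀ {a c : V} (p : G.Walk a c), a ∈ A → c ∉ A → ∃ e ∈ p.edges, e ∈ G.cutEdges A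
  | _, _, .nil _, ha, hc => absurd ha hc
  | _, _, .cons (v := b) e he p, ha, hc => by
    by_cases hb : b ∈ A
    · obtain ⟨e', he', hcut⟩ := p.exists_mem_edges_mem_cutEdges hb hc
      exact ⟨e', List.mem_cons_of_mem _ he', hcut⟩
    · exact ⟨e, List.mem_cons_self, (mem_cutEdges_iff_of_ends he).2 (iff_of_true ha hb)⟩

lemma HasEDP.le_ncard_cutEdges {u v : V} {n : ℕ} (h : G.HasEDP u v n) {A : Set V}
    (hu : u ∈ A) (hv : v ∉ A) : n ≤ (G.cutEdges A).ncard := by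
  obtain ⟨P, -, hdisj⟩ := h
  choose f hfP hfA using fun i => (P i).exists_mem_edges_mem_cutEdges hu hv
  have hinj : Function.Injective fun i => (⟨f i, hfA i⟩ : G.cutEdges A) := by
    intro i j hij
    by_contra hne
    have hfij : f i = f j := congrArg Subtype.val hij
    exact hdisj i j hne (f i) (hfP i) (hfij ▸ hfP j)
  simpa [Nat.card_coe_set_eq] using Nat.card_le_card_of_injective _ hinj

section Flow

attribute [local instance] Fintype.ofFinite

/-- A partial orientation: `σ e = some (a, b)` sends one unit of flow along `e` from `a` to `b`,
`σ e = none` leaves `e` unused. -/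
def IsOrientation (σ : G.Edge → Option (V × V)) : Prop :=
  ∀ e a b, σ e = some (a, b) → G.ends e = s(a, b)

noncomputable def arcExcess : Option (V × V) → V → ℤ
  | none => 0
  | some (a, b) => Pi.single a 1 - Pi.single b 1

noncomputable def excess (σ : G.Edge → Option (V × V)) : V → ℤ :=
  ∑ e, arcExcess (σ e)

structure IsFlow (σ : G.Edge → Option (V × V)) (u v : V) (n : ℕ) : Prop where
  isOrientation : IsOrientation σ
  excess_eq : ∀ x, x ≠ v → excess σ x = (Pi.single u (n : ℤ) : V → ℤ) x

variable {σ : G.Edge → Option (V × V)}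

lemma IsOrientation.update (hσ : IsOrientation σ) {e : G.Edge} {o : Option (V × V)}
    (ho : ∀ a b, o = some (a, b) → G.ends e = s(a, b)) :
    IsOrientation (Function.update σ e o) := by
  intro e' a b h
  by_cases he : e' = e
  · subst he
    exact ho a b (by simpa using h)
  · exact hσ e' a b (by simpa [he] using h)

lemma excess_update (σ : G.Edge → Option (V × V)) (e : G.Edge) (o : Option (V × V)) :
    excess (Function.update σ e o) = excess σ - arcExcess (σ e) + arcExcess o := by
  simp only [excess]
  rw [← Finset.add_sum_erase _ _ (Finset.mem_univ e),
    ← Finset.add_sum_erase _ _ (Finset.mem_univ e), Function.update_self,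
    Finset.sum_congr rfl fun e' he' => by rw [Function.update_of_ne (Finset.ne_of_mem_erase he')]]
  abel

lemma exists_eq_some_of_pos_excess {x : V} (hx : 0 < excess σ x) :
    ∃ e b, σ e = some (x, b) := by
  by_contra! h
  refine hx.not_ge ?_
  rw [excess, Finset.sum_apply]
  refine Finset.sum_nonpos fun e _ => ?_
  rcases he : σ e with _ | ⟨a, b⟩
  · simp [arcExcess]
  · have hax : a ≠ x := fun hax => h e b (hax ▸ he)
    simp only [arcExcess, Pi.sub_apply, Pi.single_apply, if_neg hax.symm]
    split_ifs <;> simp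

/-- `e` can carry one more unit of flow from `a` to `b`. -/
def Residual (σ : G.Edge → Option (V × V)) (e : G.Edge) (a b : V) : Prop :=
  σ e = none ∨ σ e = some (b, a)

def Walk.IsResidual (σ : G.Edge → Option (V × V)) : ∀ {a b : V}, G.Walk a b → Prop
  | _, _, .nil _ => True
  | a, _, .cons (v := b) e _ p => Residual σ e a b ∧ p.IsResidual σ

lemma Walk.IsResidual.congr {σ' : G.Edge → Option (V × V)} :
    ∀ {a b : V} {p : G.Walk a b}, (∀ e ∈ p.edges, σ' e = σ e) → p.IsResidual σ →
      p.IsResidual σ'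
  | _, _, .nil _, _, _ => trivial
  | _, _, .cons e _ _, heq, hres => by
    rw [Walk.IsResidual] at hres ⊢
    refine ⟨?_, hres.2.congr fun e' he' => heq e' (List.mem_cons_of_mem _ he')⟩
    rw [Residual, heq e List.mem_cons_self]
    exact hres.1

lemma Walk.eq_or_exists_mem_ends : ∀ {a b : V}, G.Walk a b → b = a ∨ ∃ e, b ∈ G.ends e
  | _, _, .nil _ => Or.inl rfl
  | _, _, .cons e he p => p.eq_or_exists_mem_ends.elim
      (fun h => Or.inr ⟨e, by rw [he, h]; exact Sym2.mem_mk_right _ _⟩) Or.inr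

/-- Trails rather than walks, so that augmenting flips each edge once;
`Walk.exists_residual_trail_snoc` shows that no reachable vertex is lost. -/
def residualReach (σ : G.Edge → Option (V × V)) (u : V) : Set V :=
  {y | ∃ p : G.Walk u y, p.edges.Nodup ∧ p.IsResidual σ}

lemma mem_residualReach_self (u : V) : u ∈ residualReach σ u :=
  ⟨.nil u, List.nodup_nil, trivial⟩

/-- If `e` already occurs on `p`, cut `p` there instead of appending `e`. -/
lemma Walk.exists_residual_trail_snoc {x y : V} {e : G.Edge} (he : G.ends e = s(x, y))
    (hres : Residual σ e x y) :
    ∀ {u : V} (p : G.Walk u x), p.edges.Nodup → p.IsResidual σ →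
      ∃ q : G.Walk u y, q.edges ⊆ e :: p.edges ∧ q.edges.Nodup ∧ q.IsResidual σ
  | _, .nil _, _, _ =>
    ⟨.cons e he (.nil y), by simp [Walk.edges], by simp [Walk.edges], hres, trivial⟩
  | u, .cons (v := w) e' he' p, hnd, hres' => by
    rw [Walk.edges, List.nodup_cons] at hnd
    rw [Walk.IsResidual] at hres'
    obtain ⟨hres', hp⟩ := hres'
    by_cases hee : e' = e
    · subst hee
      rcases Sym2.eq_iff.1 (he'.symm.trans he) with ⟨rfl, rfl⟩ | ⟨rfl, -⟩
      · exact ⟨.cons e' he (.nil _), by simp [Walk.edges], by simp [Walk.edges], hres, trivial⟩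
      · exact ⟨.nil u, by simp [Walk.edges], List.nodup_nil, trivial⟩
    · obtain ⟨q, hsub, hqnd, hq⟩ := p.exists_residual_trail_snoc he hres hnd.2 hp
      refine ⟨.cons e' he' q, ?_, ?_, hres', hq⟩
      · intro f hf
        simp only [Walk.edges, List.mem_cons] at hf ⊢
        rcases hf with rfl | hf
        · exact Or.inr (Or.inl rfl)
        · rcases List.mem_cons.1 (hsub hf) with rfl | hf <;> simp [*]
      · exact List.nodup_cons.2 ⟨fun h => (List.mem_cons.1 (hsub h)).elim hee hnd.1, hqnd⟩

lemma mem_residualReach_of_residual {u x y : V} (hx : x ∈ residualReach σ u) {e : G.Edge}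
    (he : G.ends e = s(x, y)) (hres : Residual σ e x y) : y ∈ residualReach σ u := by
  obtain ⟨p, hnd, hp⟩ := hx
  obtain ⟨q, -, hq⟩ := p.exists_residual_trail_snoc he hres hnd hp
  exact ⟨q, hq⟩

lemma residualReach_finite (σ : G.Edge → Option (V × V)) (u : V) :
    (residualReach σ u).Finite := by
  refine (Set.finite_iUnion fun e => (G.ends e).toFinset.finite_toSet).insert u |>.subset ?_
  rintro y ⟨p, -⟩
  rcases p.eq_or_exists_mem_ends with rfl | ⟨e, he⟩
  · exact Set.mem_insert _ _
  · exact Set.mem_insert_of_mem _ (Set.mem_iUnion.2 ⟨e, by simpa using he⟩)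

lemma IsOrientation.exists_flip (hσ : IsOrientation σ) {e : G.Edge} {a b : V}
    (he : G.ends e = s(a, b)) (hres : Residual σ e a b) :
    ∃ σ' : G.Edge → Option (V × V), IsOrientation σ' ∧ (∀ f ≠ e, σ' f = σ f) ∧
      excess σ' = excess σ + Pi.single a 1 - Pi.single b 1 := by
  rcases hres with hnone | hback
  · refine ⟨Function.update σ e (some (a, b)), hσ.update fun a' b' h => ?_,
      fun f hf => Function.update_of_ne hf _ _, ?_⟩
    · cases h; exact he
    · rw [excess_update, hnone, arcExcess, arcExcess]; abel
  · refine ⟨Function.update σ e none, hσ.update (fun _ _ h => by cases h),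
      fun f hf => Function.update_of_ne hf _ _, ?_⟩
    rw [excess_update, hback, arcExcess, arcExcess]; abel

lemma IsOrientation.exists_augment (hσ : IsOrientation σ) {a c : V} (p : G.Walk a c)
    (hnd : p.edges.Nodup) (hp : p.IsResidual σ) :
    ∃ σ' : G.Edge → Option (V × V), IsOrientation σ' ∧
      excess σ' = excess σ + Pi.single a 1 - Pi.single c 1 := by
  induction p generalizing σ with
  | nil => exact ⟨σ, hσ, by abel⟩
  | @cons a b c e he p ih =>
    rw [Walk.edges, List.nodup_cons] at hnd
    obtain ⟨hres, hp⟩ := hp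
    obtain ⟨σ₁, hσ₁, hoff, hexc₁⟩ := hσ.exists_flip he hres
    have hp₁ : p.IsResidual σ₁ :=
      hp.congr fun f hf => hoff f fun hfe => hnd.1 (hfe ▸ hf)
    obtain ⟨σ', hσ', hexc'⟩ := ih hσ₁ hnd.2 hp₁
    exact ⟨σ', hσ', by rw [hexc', hexc₁]; abel⟩

lemma IsFlow.exists_succ {u v : V} {n : ℕ} (hσ : IsFlow σ u v n)
    (hv : v ∈ residualReach σ u) : ∃ σ' : G.Edge → Option (V × V), IsFlow σ' u v (n + 1) := by
  obtain ⟨p, hnd, hp⟩ := hv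
  obtain ⟨σ', hσ', hexc⟩ := hσ.isOrientation.exists_augment p hnd hp
  refine ⟨σ', hσ', fun x hx => ?_⟩
  simp only [hexc, Pi.add_apply, Pi.sub_apply, hσ.excess_eq x hx, Pi.single_eq_of_ne hx,
    sub_zero, Nat.cast_succ, Pi.single_add]

/-- Closure under residual steps forces every edge crossing `S` to be oriented out of `S`. -/
lemma sum_arcExcess_of_residual_closed (hσ : IsOrientation σ) {S : Finset V}
    (hS : ∀ x ∈ S, ∀ e y, G.ends e = s(x, y) → Residual σ e x y → y ∈ S) (e : G.Edge) :
    ∑ x ∈ S, arcExcess (σ e) x = if e ∈ G.cutEdges ↑S then 1 else 0 := by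
  rcases hσe : σ e with _ | ⟨a, b⟩
  · obtain ⟨a, b, hab⟩ := exists_pair_eq (G.ends e)
    have hba : b ∈ S → a ∈ S := fun hb => hS b hb e a (hab.trans Sym2.eq_swap) (Or.inl hσe)
    have hab' : a ∈ S → b ∈ S := fun ha => hS a ha e b hab (Or.inl hσe)
    rw [if_neg (by rw [mem_cutEdges_iff_of_ends hab, Finset.mem_coe, Finset.mem_coe]; tauto)]
    simp [arcExcess]
  · have hab := hσ e a b hσe
    have hba : b ∈ S → a ∈ S := fun hb => hS b hb e a (hab.trans Sym2.eq_swap) (Or.inr hσe)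
    simp only [arcExcess, Pi.sub_apply, Finset.sum_sub_distrib,
      Finset.sum_pi_single', mem_cutEdges_iff_of_ends hab, Finset.mem_coe]
    by_cases ha : a ∈ S <;> by_cases hb : b ∈ S <;> simp_all

/-- Max-flow min-cut: summing excesses over the residually reachable set, which contains `u` but
not `v`, counts its cut edges. -/
lemma IsFlow.ncard_cutEdges_residualReach {u v : V} {n : ℕ} (hσ : IsFlow σ u v n)
    (hv : v ∉ residualReach σ u) : (G.cutEdges (residualReach σ u)).ncard = n := by
  have hR := residualReach_finite σ u
  have hclosed : ∀ x ∈ hR.toFinset, ∀ e y, G.ends e = s(x, y) → Residual σ e x y →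
      y ∈ hR.toFinset := by
    simp only [Set.Finite.mem_toFinset]
    exact fun x hx e y he hres => mem_residualReach_of_residual hx he hres
  have hsum : ∑ x ∈ hR.toFinset, excess σ x = n := by
    rw [Finset.sum_congr rfl fun x hx =>
        hσ.excess_eq x fun hxv => hv (hxv ▸ hR.mem_toFinset.1 hx),
      Finset.sum_pi_single', if_pos (hR.mem_toFinset.2 (mem_residualReach_self u))]
  simp only [excess, Finset.sum_apply] at hsum
  rw [Finset.sum_comm, Finset.sum_congr rfl fun e _ =>
    sum_arcExcess_of_residual_closed hσ.isOrientation hclosed e, Finset.sum_boole,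
    hR.coe_toFinset] at hsum
  rw [← Set.ncard_coe_finset, Finset.coe_filter_univ] at hsum
  exact_mod_cast hsum

lemma exists_isFlow {u v : V} {n : ℕ}
    (hcut : ∀ A : Set V, u ∈ A → v ∉ A → n ≤ (G.cutEdges A).ncard) :
    ∀ j ≤ n, ∃ σ : G.Edge → Option (V × V), IsFlow σ u v j
  | 0, _ => ⟨fun _ => none, (fun _ _ _ h => by cases h), fun x _ => by simp [excess, arcExcess]⟩
  | j + 1, hj => by
    obtain ⟨σ, hσ⟩ := exists_isFlow hcut j (by omega)
    by_cases hv : v ∈ residualReach σ u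
    · exact hσ.exists_succ hv
    · have := hcut _ (mem_residualReach_self u) hv
      rw [hσ.ncard_cutEdges_residualReach hv] at this
      omega

noncomputable def eraseEdges (σ : G.Edge → Option (V × V)) (l : List G.Edge) :
    G.Edge → Option (V × V) :=
  fun e => if e ∈ l then none else σ e

@[simp]
lemma eraseEdges_nil (σ : G.Edge → Option (V × V)) : eraseEdges σ [] = σ := by
  funext f
  simp [eraseEdges]

lemma eraseEdges_cons (σ : G.Edge → Option (V × V)) (e : G.Edge) (l : List G.Edge) :
    eraseEdges σ (e :: l) = eraseEdges (Function.update σ e none) l := by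
  funext f
  by_cases hf : f = e <;> simp [eraseEdges, hf]

lemma isOrientation_eraseEdges (hσ : IsOrientation σ) (l : List G.Edge) :
    IsOrientation (eraseEdges σ l) := by
  intro e a b h
  by_cases he : e ∈ l
  · simp [eraseEdges, he] at h
  · exact hσ e a b (by simpa [eraseEdges, he] using h)

lemma card_filter_update_none_lt {e : G.Edge} (he : σ e ≠ none) :
    (Finset.univ.filter fun f => Function.update σ e none f ≠ none).card <
      (Finset.univ.filter fun f => σ f ≠ none).card := by
  refine Finset.card_lt_card ⟨Finset.monotone_filter_right _ fun f hf => ?_, fun hsub => ?_⟩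
  · by_cases hfe : f = e <;> simp_all
  · simpa using hsub (by simpa using he : e ∈ Finset.univ.filter fun f => σ f ≠ none)

/-- Flow decomposition step: follow oriented edges out of a vertex with positive excess; every
other vertex except the sink has nonnegative excess, so the walk can only stop at the sink. -/
lemma IsOrientation.exists_trail_of_excess (hσ : IsOrientation σ) {x v : V} (hxv : x ≠ v)
    (hx : 0 < excess σ x) (hpos : ∀ y, y ≠ x → y ≠ v → 0 ≤ excess σ y) :
    ∃ p : G.Walk x v, p.edges.Nodup ∧ (∀ e ∈ p.edges, σ e ≠ none) ∧
      excess (eraseEdges σ p.edges) = excess σ - Pi.single x 1 + Pi.single v 1 := by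
  induction hn : (Finset.univ.filter fun e => σ e ≠ none).card using Nat.strong_induction_on
    generalizing σ x with
  | _ n ih =>
  obtain ⟨e, b, he⟩ := exists_eq_some_of_pos_excess hx
  have hxb := ne_of_ends_eq (hσ e x b he)
  set σ₁ := Function.update σ e none
  have hexc₁ : excess σ₁ = excess σ - Pi.single x 1 + Pi.single b 1 := by
    rw [excess_update, he, arcExcess, arcExcess]; abel
  by_cases hbv : b = v
  · subst hbv
    refine ⟨.cons e (hσ e x b he) (.nil b), by simp [Walk.edges], by simp [Walk.edges, he], ?_⟩
    rw [Walk.edges, Walk.edges, eraseEdges_cons, eraseEdges_nil, hexc₁]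
  obtain ⟨q, hqnd, hqsupp, hqexc⟩ := ih _ (hn ▸ card_filter_update_none_lt (by simp [he]))
    (hσ.update fun _ _ h => by cases h) hbv
    (by rw [hexc₁]; simpa [Pi.single_eq_of_ne hxb, hxb.symm] using hpos b hxb.symm hbv)
    (fun y hyb hyv => by
      rw [hexc₁]
      by_cases hyx : y = x
      · subst hyx
        simpa [Pi.single_eq_of_ne hyb] using Int.add_one_le_of_lt hx
      · simpa [Pi.single_eq_of_ne hyb, Pi.single_eq_of_ne hyx] using hpos y hyx hyv) rfl
  have heq : ∀ f ∈ q.edges, f ≠ e := fun f hf hfe => hqsupp f hf (by simp [hfe])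
  refine ⟨.cons e (hσ e x b he) q, ?_, ?_, ?_⟩
  · exact List.nodup_cons.2 ⟨fun h => heq e h rfl, hqnd⟩
  · intro f hf
    rcases List.mem_cons.1 hf with rfl | hf
    · simp [he]
    · simpa [σ₁, Function.update_of_ne (heq f hf)] using hqsupp f hf
  · rw [Walk.edges, eraseEdges_cons, hqexc, hexc₁]
    abel

lemma IsFlow.exists_disjoint_trails {u v : V} (huv : u ≠ v) :
    ∀ {n : ℕ} {σ : G.Edge → Option (V × V)}, IsFlow σ u v n →
      ∃ P : Fin n → G.Walk u v, (∀ i, (P i).edges.Nodup) ∧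
        (∀ i j, i ≠ j → ∀ e ∈ (P i).edges, e ∉ (P j).edges) ∧
        ∀ i, ∀ e ∈ (P i).edges, σ e ≠ none
  | 0, _, _ => ⟨Fin.elim0, fun i => Fin.elim0 i, fun i => Fin.elim0 i, fun i => Fin.elim0 i⟩
  | n + 1, σ, hσ => by
    obtain ⟨p, hpnd, hpsupp, hexc⟩ := hσ.isOrientation.exists_trail_of_excess huv
      (by rw [hσ.excess_eq u huv]; simp)
      (fun y hyu hyv => by rw [hσ.excess_eq y hyv, Pi.single_eq_of_ne hyu])
    have hσ' : IsFlow (eraseEdges σ p.edges) u v n := by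
      refine ⟨isOrientation_eraseEdges hσ.isOrientation _, fun x hx => ?_⟩
      rw [hexc]
      by_cases hxu : x = u
      · subst hxu; simp [hσ.excess_eq x hx, hx]
      · simp [hσ.excess_eq x hx, hx, hxu]
    obtain ⟨P, hPnd, hPdisj, hPsupp⟩ := hσ'.exists_disjoint_trails huv
    have hoff : ∀ i, ∀ e ∈ (P i).edges, e ∉ p.edges := fun i e he hp =>
      hPsupp i e he (by simp [eraseEdges, hp])
    refine ⟨Fin.cons p P, Fin.cases hpnd hPnd, fun i j hij e hi hj => ?_, fun i e he => ?_⟩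
    · cases i using Fin.cases <;> cases j using Fin.cases <;>
        simp only [Fin.cons_zero, Fin.cons_succ] at hi hj
      · exact hij rfl
      · exact hoff _ e hj hi
      · exact hoff _ e hi hj
      · exact hPdisj _ _ (fun h => hij (congrArg Fin.succ h)) e hi hj
    · cases i using Fin.cases <;> simp only [Fin.cons_zero, Fin.cons_succ] at he
      · exact hpsupp e he
      · exact fun h => hPsupp _ e he (by simp [eraseEdges, h])

theorem hasEDP_of_forall_le_ncard_cutEdges {u v : V} (huv : u ≠ v) {n : ℕ}
    (hcut : ∀ A : Set V, u ∈ A → v ∉ A → n ≤ (G.cutEdges A).ncard) :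
    G.HasEDP u v n := by
  obtain ⟨σ, hσ⟩ := exists_isFlow hcut n le_rfl
  obtain ⟨P, hnd, hdisj, -⟩ := hσ.exists_disjoint_trails huv
  exact ⟨P, hnd, hdisj⟩

end Flow

variable {k : ℕ}

lemma ExactlyEdgeConnected.edgeConnected (hG : G.ExactlyEdgeConnected k) : G.EdgeConnected k :=
  ⟨hG.1, fun u v huv => (hG.2 u v huv).1⟩

lemma EdgeConnected.le_ncard_cutEdges (hG : G.EdgeConnected k) {A : Set V} (hA : A.Nonempty)
    (hAc : Aᶜ.Nonempty) : k ≤ (G.cutEdges A).ncard := by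
  obtain ⟨a, ha⟩ := hA
  obtain ⟨b, hb⟩ := hAc
  exact (hG.2 a b fun hab => hb (hab ▸ ha)).le_ncard_cutEdges ha hb

lemma ExactlyEdgeConnected.exists_isMinCut (hG : G.ExactlyEdgeConnected k) {u v : V}
    (huv : u ≠ v) : ∃ A, u ∈ A ∧ v ∉ A ∧ G.IsMinCut A ∧ (G.cutEdges A).ncard = k := by
  obtain ⟨A, hu, hv, hA⟩ : ∃ A, u ∈ A ∧ v ∉ A ∧ (G.cutEdges A).ncard < k + 1 := by
    by_contra! h
    exact (hG.2 u v huv).2 (hasEDP_of_forall_le_ncard_cutEdges huv h)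
  have hk := hG.edgeConnected.le_ncard_cutEdges ⟨u, hu⟩ ⟨v, hv⟩
  refine ⟨A, hu, hv, ⟨⟨u, hu⟩, ⟨v, hv⟩, fun B hB hBc => ?_⟩, by omega⟩
  have := hG.edgeConnected.le_ncard_cutEdges hB hBc
  omega

end

/-- **Graphs with only trivial minimum cuts are quasi `k`-regular.**  If `G`
is an exactly `k`-edge-connected multigraph all of whose minimum edge cuts are
trivial (one side is a single vertex), then at most one vertex of `G` has
degree different from `k`. -/
theorem quasiRegular_of_minCuts_trivial {V : Type} (G : Multigraph V) (k : ℕ)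
    (hG : G.ExactlyEdgeConnected k)
    (htriv : ∀ A : Set V, G.IsMinCut A → (∃ x : V, A = {x}) ∨ ∃ x : V, Aᶜ = {x}) :
    G.QuasiRegular k := by
  intro u hu v hv
  by_contra huv
  obtain ⟨A, huA, hvA, hmin, hcard⟩ := hG.exists_isMinCut huv
  rcases htriv A hmin with ⟨x, rfl⟩ | ⟨x, hx⟩
  · rw [Set.mem_singleton_iff] at huA
    subst huA
    exact hu (by rw [degree_eq_ncard_cutEdges_singleton, hcard])
  · rw [← Set.mem_compl_iff, hx, Set.mem_singleton_iff] at hvA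
    subst hvA
    exact hv (by rw [degree_eq_ncard_cutEdges_singleton, ← hx, cutEdges_compl, hcard])

end Multigraph
end
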